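/- arXiv:2512.13504 — 6 statements merged into one kernel-verified Lean document; each statement's English description precedes it below -/
import Mathlib

section
/- Let A be an n×n real matrix admitting an exponential decay bound: there exist M > 0 and α > 0 such that ‖exp(tA)‖₂ ≤ M·exp(−α t) for all t ≥ 0. Let Q be a symmetric n×n real matrix such that Q·Aᵀ + A·Q is negative semidefinite (i.e., −(Q·Aᵀ + A·Q) is positive semidefinite). Then Q is positive semidefinite. -/
/-!
The Lyapunov curve `P t = exp(tA) Q exp(tAᵀ)` starts at `P 0 = Q`, has derivative
`exp(tA) (AQ + QAᵀ) exp(tAᵀ)`, which is negative semidefinite, and tends to `0` because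
`exp(tA)` decays. So `P` decreases in the Loewner order towards `0`, and its starting point `Q`
is positive semidefinite.
-/

open Matrix Filter
open scoped Matrix.Norms.L2Operator Topology

theorem hasDerivAt_exp_smul_mul_mul_exp_smul {𝕂 𝔸 : Type*} [RCLike 𝕂] [NormedRing 𝔸]
    [NormedAlgebra 𝕂 𝔸] [CompleteSpace 𝔸] (a c b : 𝔸) (t : 𝕂) :
    HasDerivAt (fun u : 𝕂 => NormedSpace.exp (u • a) * c * NormedSpace.exp (u • b))
      (NormedSpace.exp (t • a) * (a * c + c * b) * NormedSpace.exp (t • b)) t := by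
  convert ((hasDerivAt_exp_smul_const a t).mul_const c).fun_mul (hasDerivAt_exp_smul_const' b t)
    using 1
  noncomm_ring

theorem tendsto_zero_of_norm_le_mul_exp_neg {E : Type*} [SeminormedAddGroup E] {f : ℝ → E}
    {M α : ℝ} (hα : 0 < α) (hf : ∀ t, 0 ≤ t → ‖f t‖ ≤ M * Real.exp (-α * t)) :
    Tendsto f atTop (𝓝 0) := by
  have hexp : Tendsto (fun t => Real.exp (-α * t)) atTop (𝓝 0) :=
    Real.tendsto_exp_atBot.comp (tendsto_id.const_mul_atTop_of_neg (neg_lt_zero.2 hα))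
  exact squeeze_zero_norm' ((eventually_ge_atTop 0).mono hf) (by simpa using hexp.const_mul M)

namespace Matrix

variable {ι : Type*} [Fintype ι] [DecidableEq ι]

theorem posSemidef_of_hasDerivAt_of_tendsto_zero {P P' : ℝ → Matrix ι ι ℝ}
    (hP : ∀ t, HasDerivAt P (P' t) t) (hP' : ∀ t, (-P' t).PosSemidef)
    (hlim : Tendsto P atTop (𝓝 0)) {s : ℝ} (hs : (P s).IsHermitian) : (P s).PosSemidef := by
  refine PosSemidef.of_dotProduct_mulVec_nonneg hs fun x => ?_
  let q : Matrix ι ι ℝ →L[ℝ] ℝ := LinearMap.toContinuousLinearMap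
    { toFun := fun N => x ⬝ᵥ N *ᵥ x
      map_add' := fun N₁ N₂ => by simp only [add_mulVec, dotProduct_add]
      map_smul' := fun c N => by simp [smul_mulVec] }
  have hanti : Antitone (fun t => q (P t)) := by
    refine antitone_of_hasDerivAt_nonpos (fun t => q.hasFDerivAt.comp_hasDerivAt t (hP t))
      fun t => ?_
    simpa [q, neg_mulVec] using (hP' t).dotProduct_mulVec_nonneg x
  have hq : Tendsto (fun t => q (P t)) atTop (𝓝 0) :=
    (q.continuous.tendsto' 0 0 (map_zero q)).comp hlim
  simpa [q] using hanti.le_of_tendsto hq s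

end Matrix

theorem stmt_1_general {n : ℕ} (A Q : Matrix (Fin n) (Fin n) ℝ)
    (M α : ℝ) (hα : 0 < α)
    (hdecay : ∀ t : ℝ, 0 ≤ t →
      ‖NormedSpace.exp (t • A)‖ ≤ M * Real.exp (-α * t))
    (hQsym : Qᵀ = Q)
    (hneg : (-(Q * Aᵀ + A * Q)).PosSemidef) :
    Q.PosSemidef := by
  set E : ℝ → Matrix (Fin n) (Fin n) ℝ := fun t => NormedSpace.exp (t • A)
  have hE_transpose (t : ℝ) : NormedSpace.exp (t • Aᵀ) = (E t)ᵀ := by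
    rw [← transpose_smul, exp_transpose]
  have hE : Tendsto E atTop (𝓝 0) := tendsto_zero_of_norm_le_mul_exp_neg hα hdecay
  have hP (t : ℝ) :
      HasDerivAt (fun t => E t * Q * (E t)ᵀ) (E t * (A * Q + Q * Aᵀ) * (E t)ᵀ) t := by
    simpa only [hE_transpose] using hasDerivAt_exp_smul_mul_mul_exp_smul A Q Aᵀ t
  have hP' (t : ℝ) : (-(E t * (A * Q + Q * Aᵀ) * (E t)ᵀ)).PosSemidef := by
    convert hneg.mul_mul_conjTranspose_same (E t) using 1
    rw [conjTranspose_eq_transpose_of_trivial]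
    noncomm_ring
  have hlim : Tendsto (fun t => E t * Q * (E t)ᵀ) atTop (𝓝 0) := by
    simpa using (hE.mul_const Q).mul
      ((continuous_id.matrix_transpose.tendsto' 0 0 transpose_zero).comp hE)
  have hQ : Q.IsHermitian := by rwa [IsHermitian, conjTranspose_eq_transpose_of_trivial]
  simpa [E] using posSemidef_of_hasDerivAt_of_tendsto_zero hP hP' hlim (s := 0) (by simpa [E] using hQ)

/-- If `A` admits the exponential decay bound
`‖exp(tA)‖₂ ≤ M·exp(−αt)` for all `t ≥ 0`, and `Q` is symmetric with
`Q·Aᵀ + A·Q` negative semidefinite, then `Q` is positive semidefinite. -/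
theorem stmt_1 {n : ℕ} (A Q : Matrix (Fin n) (Fin n) ℝ)
    (M α : ℝ) (hM : 0 < M) (hα : 0 < α)
    (hdecay : ∀ t : ℝ, 0 ≤ t →
      ‖NormedSpace.exp (t • A)‖ ≤ M * Real.exp (-α * t))
    (hQsym : Qᵀ = Q)
    (hneg : (-(Q * Aᵀ + A * Q)).PosSemidef) :
    Q.PosSemidef :=
  stmt_1_general A Q M α hα hdecay hQsym hneg
end

section
/- Let A be an n×n real matrix admitting an exponential decay bound: there exist M > 0 and α > 0 such that ‖exp(tA)‖₂ ≤ M·exp(−α t) for all t ≥ 0. Let Q be an n×n real matrix, and suppose X₁ and X₂ are n×n real matrices both satisfying the Lyapunov equation A·X + X·Aᵀ = −Q. Then X₁ = X₂. -/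
/-!
The difference `Y = X₁ - X₂` solves the homogeneous equation `A Y + Y Aᵀ = 0`, i.e. `Y Aᵀ = -A Y`;
exponentiating this intertwining relation gives `exp(tA) Y exp(tA)ᵀ = Y` for every `t`. Since
transposition preserves the spectral norm, `‖Y‖ ≤ ‖exp(tA)‖² ‖Y‖ ≤ M² e^{-2αt} ‖Y‖`, and letting
`t → ∞` forces `Y = 0`.
-/

open Matrix Filter Topology
open scoped Matrix.Norms.L2Operator

namespace Matrix

variable {m 𝕜 : Type*} [Fintype m] [DecidableEq m] [RCLike 𝕜]

theorem semiconjBy_exp_right {x a b : Matrix m m 𝕜} (h : SemiconjBy x a b) :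
    SemiconjBy x (NormedSpace.exp a) (NormedSpace.exp b) := by
  rw [NormedSpace.exp_eq_tsum 𝕜]
  exact SemiconjBy.tsum_right x (NormedSpace.expSeries_summable' _)
    (NormedSpace.expSeries_summable' _) fun _ ↦ (h.pow_right _).smul_right _

theorem exp_mul_exp_neg (A : Matrix m m 𝕜) :
    NormedSpace.exp A * NormedSpace.exp (-A) = 1 := by
  rw [← exp_add_of_commute _ _ (Commute.refl A).neg_right, add_neg_cancel, NormedSpace.exp_zero]

theorem exp_mul_mul_exp_transpose_of_add_eq_zero {A Y : Matrix m m 𝕜}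
    (h : A * Y + Y * Aᵀ = 0) :
    NormedSpace.exp A * Y * (NormedSpace.exp A)ᵀ = Y := by
  rw [← exp_transpose]
  have hsemiconj : SemiconjBy Y Aᵀ (-A) := by
    rw [SemiconjBy, neg_mul, eq_neg_of_add_eq_zero_right h]
  rw [mul_assoc, (semiconjBy_exp_right hsemiconj).eq, ← mul_assoc, exp_mul_exp_neg, one_mul]

theorem l2_opNorm_transpose {n : Type*} [Fintype n] [DecidableEq n] (A : Matrix m n ℝ) :
    ‖Aᵀ‖ = ‖A‖ := by
  rw [← conjTranspose_eq_transpose_of_trivial, l2_opNorm_conjTranspose]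

theorem norm_le_sq_mul_norm_of_mul_mul_transpose_eq {B Y : Matrix m m ℝ} (h : B * Y * Bᵀ = Y) :
    ‖Y‖ ≤ ‖B‖ ^ 2 * ‖Y‖ :=
  calc ‖Y‖ = ‖B * Y * Bᵀ‖ := by rw [h]
    _ ≤ ‖B‖ * ‖Y‖ * ‖Bᵀ‖ := norm_mul₃_le
    _ = ‖B‖ ^ 2 * ‖Y‖ := by rw [l2_opNorm_transpose]; ring

end Matrix

theorem stmt_2_general {n : ℕ} (A Q X₁ X₂ : Matrix (Fin n) (Fin n) ℝ)
    (M α : ℝ) (hα : 0 < α)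
    (hdecay : ∀ t : ℝ, 0 ≤ t →
      ‖NormedSpace.exp (t • A)‖ ≤ M * Real.exp (-α * t))
    (hX₁ : A * X₁ + X₁ * Aᵀ = -Q)
    (hX₂ : A * X₂ + X₂ * Aᵀ = -Q) :
    X₁ = X₂ := by
  set Y := X₁ - X₂
  have hY : A * Y + Y * Aᵀ = 0 := by
    rw [mul_sub, sub_mul, sub_add_sub_comm, hX₁, hX₂, sub_self]
  have hbound : ∀ t : ℝ, 0 ≤ t → ‖Y‖ ≤ (M * Real.exp (-α * t)) ^ 2 * ‖Y‖ := fun t ht ↦ by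
    have hYt : (t • A) * Y + Y * (t • A)ᵀ = 0 := by
      rw [transpose_smul, smul_mul_assoc, mul_smul_comm, ← smul_add, hY, smul_zero]
    refine (norm_le_sq_mul_norm_of_mul_mul_transpose_eq
      (exp_mul_mul_exp_transpose_of_add_eq_zero hYt)).trans ?_
    gcongr
    exact hdecay t ht
  have hlim : Tendsto (fun t : ℝ ↦ (M * Real.exp (-α * t)) ^ 2 * ‖Y‖) atTop (𝓝 0) := by
    have hexp :=
      Real.tendsto_exp_atBot.comp (tendsto_id.const_mul_atTop_of_neg (neg_neg_of_pos hα))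
    simpa using ((hexp.const_mul M).pow 2).mul_const ‖Y‖
  have hY0 : ‖Y‖ ≤ 0 := ge_of_tendsto hlim (eventually_ge_atTop 0 |>.mono hbound)
  exact sub_eq_zero.mp (norm_le_zero_iff.mp hY0)

/-- If `A` admits the exponential decay bound
`‖exp(tA)‖₂ ≤ M·exp(−αt)` for all `t ≥ 0`, then the Lyapunov equation
`A·X + X·Aᵀ = −Q` has at most one solution. -/
theorem stmt_2 {n : ℕ} (A Q X₁ X₂ : Matrix (Fin n) (Fin n) ℝ)
    (M α : ℝ) (hM : 0 < M) (hα : 0 < α)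
    (hdecay : ∀ t : ℝ, 0 ≤ t →
      ‖NormedSpace.exp (t • A)‖ ≤ M * Real.exp (-α * t))
    (hX₁ : A * X₁ + X₁ * Aᵀ = -Q)
    (hX₂ : A * X₂ + X₂ * Aᵀ = -Q) :
    X₁ = X₂ :=
  stmt_2_general A Q X₁ X₂ M α hα hdecay hX₁ hX₂
end

section
/- Let A be an n×n real matrix admitting an exponential decay bound: there exist M > 0 and α > 0 such that ‖exp(tA)‖₂ ≤ M·exp(−α t) for all t ≥ 0. Let B be an n×m real matrix, let P be the unique solution of the Lyapunov equation A·P + P·Aᵀ + B·Bᵀ = 0, and let C be a p×n real matrix. Then tr(C·P·Cᵀ) equals the infimum of tr(C·X·Cᵀ) over all symmetric positive definite n×n real matrices X satisfying the strict Lyapunov inequality that X·Aᵀ + A·X + B·Bᵀ is negative definite. -/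
/-!
When `exp (tA) → 0`, the solution of `A S + S Aᵀ + Q = 0` is
`S = ∫₀^∞ exp (tA) Q exp (tA)ᵀ dt`: indeed `exp (tA) S exp (tA)ᵀ` has derivative
`-exp (tA) Q exp (tA)ᵀ` and tends to `0`. Hence the solution is unique (so the Lyapunov operator is
invertible and symmetric data give symmetric solutions), and it is positive semidefinite, or
definite, when `Q` is. For a feasible `X`, `X - P` solves the Lyapunov equation with a positive
definite right-hand side, so `tr (C P Cᵀ) ≤ tr (C X Cᵀ)`. Conversely, if `A P₁ + P₁ Aᵀ + 1 = 0`,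
then `P + δ P₁` is feasible for every `δ > 0`, and its cost tends to `tr (C P Cᵀ)` as `δ → 0`.
-/

open Matrix Filter Topology NormedSpace
open scoped Matrix.Norms.L2Operator

namespace Matrix

variable {n : Type*} [Fintype n]

theorem PosSemidef.trace_mul_mul_transpose_le {p : Type*} [Fintype p] {P X : Matrix n n ℝ}
    (h : (X - P).PosSemidef) (C : Matrix p n ℝ) : (C * P * Cᵀ).trace ≤ (C * X * Cᵀ).trace := by
  have := (h.mul_mul_conjTranspose_same C).trace_nonneg
  rw [conjTranspose_eq_transpose_of_trivial, Matrix.mul_sub, Matrix.sub_mul, trace_sub] at this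
  linarith

variable [DecidableEq n]

theorem tendsto_exp_smul_atTop_of_norm_le (A : Matrix n n ℝ) {M α : ℝ} (hα : 0 < α)
    (hdecay : ∀ t : ℝ, 0 ≤ t → ‖exp (t • A)‖ ≤ M * Real.exp (-α * t)) :
    Tendsto (fun t : ℝ => exp (t • A)) atTop (𝓝 0) := by
  refine squeeze_zero_norm' ((eventually_ge_atTop 0).mono hdecay) ?_
  simpa using (Real.tendsto_exp_atBot.comp
    (tendsto_id.const_mul_atTop_of_neg (neg_neg_of_pos hα))).const_mul M

theorem hasDerivAt_exp_smul_mul_mul_transpose (A S : Matrix n n ℝ) (t : ℝ) :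
    HasDerivAt (fun t : ℝ => exp (t • A) * S * (exp (t • A))ᵀ)
      (exp (t • A) * (A * S + S * Aᵀ) * (exp (t • A))ᵀ) t := by
  have hT : HasDerivAt (fun t : ℝ => (exp (t • A))ᵀ) (Aᵀ * (exp (t • A))ᵀ) t := by
    simpa only [← exp_transpose, transpose_smul] using hasDerivAt_exp_smul_const' Aᵀ t
  exact (((hasDerivAt_exp_smul_const A t).mul_const S).mul hT).congr_deriv (by noncomm_ring)

theorem continuous_exp_smul_mul_mul_transpose (A S : Matrix n n ℝ) :
    Continuous fun t : ℝ => exp (t • A) * S * (exp (t • A))ᵀ :=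
  continuous_iff_continuousAt.2 fun t =>
    (hasDerivAt_exp_smul_mul_mul_transpose A S t).continuousAt

noncomputable def lyapunovIntegral (A Q : Matrix n n ℝ) (T : ℝ) : Matrix n n ℝ :=
  ∫ t in 0..T, exp (t • A) * Q * (exp (t • A))ᵀ

noncomputable def quadFormCLM (x : n → ℝ) : Matrix n n ℝ →L[ℝ] ℝ :=
  LinearMap.toContinuousLinearMap
    { toFun := fun N => x ⬝ᵥ N *ᵥ x
      map_add' := fun N N' => by rw [add_mulVec, dotProduct_add]
      map_smul' := fun c N => by rw [smul_mulVec, dotProduct_smul]; rfl }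

theorem dotProduct_lyapunovIntegral_mulVec (A Q : Matrix n n ℝ) (T : ℝ) (x : n → ℝ) :
    x ⬝ᵥ lyapunovIntegral A Q T *ᵥ x =
      ∫ t in 0..T, (exp (t • A))ᵀ *ᵥ x ⬝ᵥ Q *ᵥ ((exp (t • A))ᵀ *ᵥ x) := by
  change quadFormCLM x _ = _
  rw [lyapunovIntegral, ← (quadFormCLM x).intervalIntegral_comp_comm
    ((continuous_exp_smul_mul_mul_transpose A Q).intervalIntegrable 0 T)]
  congr 1 with t
  change x ⬝ᵥ _ *ᵥ x = _
  rw [← mulVec_mulVec, ← mulVec_mulVec, dotProduct_mulVec, ← mulVec_transpose]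

section Lyapunov

variable {A S Q : Matrix n n ℝ} (hA : Tendsto (fun t : ℝ => exp (t • A)) atTop (𝓝 0))
include hA

theorem tendsto_lyapunovIntegral (hS : A * S + S * Aᵀ + Q = 0) :
    Tendsto (lyapunovIntegral A Q) atTop (𝓝 S) := by
  have hintegral (T : ℝ) : lyapunovIntegral A Q T = S - exp (T • A) * S * (exp (T • A))ᵀ := by
    have hQ : A * S + S * Aᵀ = -Q := eq_neg_of_add_eq_zero_left hS
    have hFTC := intervalIntegral.integral_eq_sub_of_hasDerivAt
      (fun t _ => hasDerivAt_exp_smul_mul_mul_transpose A S t)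
      ((continuous_exp_smul_mul_mul_transpose A _).intervalIntegrable 0 T)
    simp only [hQ, mul_neg, neg_mul, intervalIntegral.integral_neg, zero_smul, exp_zero, one_mul,
      transpose_one, mul_one] at hFTC
    rw [lyapunovIntegral, ← neg_sub, ← hFTC, neg_neg]
  have hdecay : Tendsto (fun T : ℝ => exp (T • A) * S * (exp (T • A))ᵀ) atTop (𝓝 0) := by
    simpa using (hA.mul_const S).mul ((continuous_id.matrix_transpose.tendsto 0).comp hA)
  simpa [funext hintegral] using tendsto_const_nhds.sub hdecay

theorem lyapunov_unique {S' : Matrix n n ℝ} (hS : A * S + S * Aᵀ + Q = 0)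
    (hS' : A * S' + S' * Aᵀ + Q = 0) : S = S' :=
  tendsto_nhds_unique (tendsto_lyapunovIntegral hA hS) (tendsto_lyapunovIntegral hA hS')

theorem exists_lyapunov_eq_zero (Q : Matrix n n ℝ) : ∃ S, A * S + S * Aᵀ + Q = 0 := by
  let L : Matrix n n ℝ →ₗ[ℝ] Matrix n n ℝ := LinearMap.mulLeft ℝ A + LinearMap.mulRight ℝ Aᵀ
  have hL : Function.Injective L := by
    refine (injective_iff_map_eq_zero L).2 fun S hS => lyapunov_unique hA (Q := 0) ?_ (by simp)
    simpa [L] using hS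
  obtain ⟨S, hS⟩ := LinearMap.injective_iff_surjective.1 hL (-Q)
  exact ⟨S, add_eq_zero_iff_eq_neg.2 hS⟩

theorem transpose_eq_of_lyapunov (hS : A * S + S * Aᵀ + Q = 0) (hQ : Qᵀ = Q) : Sᵀ = S := by
  refine lyapunov_unique hA ?_ hS
  simpa [transpose_add, transpose_mul, hQ, add_comm] using congrArg transpose hS

theorem PosSemidef.of_lyapunov (hS : A * S + S * Aᵀ + Q = 0) (hQ : Q.PosSemidef) :
    S.PosSemidef := by
  refine .of_dotProduct_mulVec_nonneg ?_ fun x => ?_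
  · rw [IsHermitian, conjTranspose_eq_transpose_of_trivial]
    exact transpose_eq_of_lyapunov hA hS (by simpa using hQ.isHermitian.eq)
  · have hlim := ((quadFormCLM x).continuous.tendsto S).comp (tendsto_lyapunovIntegral hA hS)
    refine ge_of_tendsto hlim ((eventually_ge_atTop 0).mono fun T hT => ?_)
    change 0 ≤ x ⬝ᵥ lyapunovIntegral A Q T *ᵥ x
    rw [dotProduct_lyapunovIntegral_mulVec]
    exact intervalIntegral.integral_nonneg hT fun t _ => by
      simpa using hQ.dotProduct_mulVec_nonneg ((exp (t • A))ᵀ *ᵥ x)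

/-- If `xᵀ S x = 0` then `S x = 0`, hence `xᵀ Q x = -xᵀ (A S + S Aᵀ) x = 0`. -/
theorem PosDef.of_lyapunov (hS : A * S + S * Aᵀ + Q = 0) (hQ : Q.PosDef) : S.PosDef := by
  have hSpsd := PosSemidef.of_lyapunov hA hS hQ.posSemidef
  refine .of_dotProduct_mulVec_pos hSpsd.isHermitian fun x hx => ?_
  refine (hSpsd.dotProduct_mulVec_nonneg x).lt_of_ne fun hzero => ?_
  have hSx : S *ᵥ x = 0 := (hSpsd.dotProduct_mulVec_zero_iff x).1 hzero.symm
  have hxS : x ᵥ* S = 0 := by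
    rw [← mulVec_transpose, transpose_eq_of_lyapunov hA hS ?_, hSx]
    simpa using hQ.isHermitian.eq
  have hQx : star x ⬝ᵥ Q *ᵥ x = 0 := by
    rw [eq_neg_of_add_eq_zero_right hS]
    simp [add_mulVec, neg_mulVec, ← mulVec_mulVec, hSx, dotProduct_mulVec x S, hxS]
  exact (hQ.dotProduct_mulVec_pos hx).ne' hQx

theorem posSemidef_sub_of_lyapunov {P X : Matrix n n ℝ} (hP : A * P + P * Aᵀ + Q = 0)
    (hX : (-(X * Aᵀ + A * X + Q)).PosSemidef) : (X - P).PosSemidef := by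
  refine PosSemidef.of_lyapunov hA ?_ hX
  rw [show A * (X - P) + (X - P) * Aᵀ + -(X * Aᵀ + A * X + Q) = -(A * P + P * Aᵀ + Q) by
    noncomm_ring, hP, neg_zero]

end Lyapunov

end Matrix

theorem stmt_4_general {n m p : ℕ} (A P : Matrix (Fin n) (Fin n) ℝ) (B : Matrix (Fin n) (Fin m) ℝ)
    (C : Matrix (Fin p) (Fin n) ℝ)
    (M α : ℝ) (hα : 0 < α)
    (hdecay : ∀ t : ℝ, 0 ≤ t →
      ‖NormedSpace.exp (t • A)‖ ≤ M * Real.exp (-α * t))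
    (hP : A * P + P * Aᵀ + B * Bᵀ = 0) :
    IsGLB {r : ℝ | ∃ X : Matrix (Fin n) (Fin n) ℝ,
        X.PosDef ∧ (-(X * Aᵀ + A * X + B * Bᵀ)).PosDef ∧ r = (C * X * Cᵀ).trace}
      ((C * P * Cᵀ).trace) := by
  have hA := tendsto_exp_smul_atTop_of_norm_le A hα hdecay
  have hPpsd : P.PosSemidef :=
    .of_lyapunov hA hP (by simpa using posSemidef_self_mul_conjTranspose B)
  obtain ⟨P₁, hP₁⟩ := exists_lyapunov_eq_zero hA (1 : Matrix (Fin n) (Fin n) ℝ)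
  have hP₁pd : P₁.PosDef := .of_lyapunov hA hP₁ .one
  refine isGLB_of_mem_closure ?_ ?_
  · rintro _ ⟨X, -, hX, rfl⟩
    exact (posSemidef_sub_of_lyapunov hA hP hX.posSemidef).trace_mul_mul_transpose_le C
  · have hfeas (δ : ℝ) (hδ : 0 < δ) :
        (-((P + δ • P₁) * Aᵀ + A * (P + δ • P₁) + B * Bᵀ)).PosDef := by
      rw [show -((P + δ • P₁) * Aᵀ + A * (P + δ • P₁) + B * Bᵀ) = δ • (1 : Matrix (Fin n) (Fin n) ℝ)
          - δ • (A * P₁ + P₁ * Aᵀ + 1) - (A * P + P * Aᵀ + B * Bᵀ) by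
        simp only [smul_add, Matrix.mul_add, Matrix.add_mul, Matrix.smul_mul, Matrix.mul_smul]
        abel, hP₁, hP]
      simpa using PosDef.one.smul hδ
    refine mem_closure_of_tendsto (f := fun δ : ℝ => (C * (P + δ • P₁) * Cᵀ).trace)
      (b := 𝓝[>] 0) ?_ (eventually_nhdsWithin_of_forall fun δ hδ =>
        ⟨P + δ • P₁, PosDef.posSemidef_add hPpsd (hP₁pd.smul hδ), hfeas δ hδ, rfl⟩)
    exact ((by fun_prop : Continuous fun δ : ℝ => (C * (P + δ • P₁) * Cᵀ).trace).tendsto' 0 _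
      (by simp)).mono_left nhdsWithin_le_nhds

/-- If `A` admits the exponential decay bound
`‖exp(tA)‖₂ ≤ M·exp(−αt)` for all `t ≥ 0`, `P` is the (unique) solution of
`A·P + P·Aᵀ + B·Bᵀ = 0`, and `C` is a `p×n` real matrix, then `tr(C·P·Cᵀ)` is the
infimum of `tr(C·X·Cᵀ)` over all symmetric positive definite `X` with
`X·Aᵀ + A·X + B·Bᵀ` negative definite. -/
theorem stmt_4 {n m p : ℕ} (A P : Matrix (Fin n) (Fin n) ℝ) (B : Matrix (Fin n) (Fin m) ℝ)
    (C : Matrix (Fin p) (Fin n) ℝ)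
    (M α : ℝ) (hM : 0 < M) (hα : 0 < α)
    (hdecay : ∀ t : ℝ, 0 ≤ t →
      ‖NormedSpace.exp (t • A)‖ ≤ M * Real.exp (-α * t))
    (hP : A * P + P * Aᵀ + B * Bᵀ = 0) :
    IsGLB {r : ℝ | ∃ X : Matrix (Fin n) (Fin n) ℝ,
        X.PosDef ∧ (-(X * Aᵀ + A * X + B * Bᵀ)).PosDef ∧ r = (C * X * Cᵀ).trace}
      ((C * P * Cᵀ).trace) :=
  stmt_4_general A P B C M α hα hdecay hP
end

section
/- Let P be a symmetric positive definite n×n real matrix and let M be a p×n real matrix and N a q×n real matrix with N ≠ 0. Then tr(M·P·Mᵀ) / tr(N·P·Nᵀ) ≤ κ(P) · ‖M‖_F² / ‖N‖_F², where κ(P) = λ_max(P)/λ_min(P) is the condition number of P (in particular tr(N·P·Nᵀ) > 0, so the left-hand side is well defined). -/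
/-!
The spectral bounds `λ_min • 1 ≤ P ≤ λ_max • 1` hold in the Loewner order, and `A ↦ tr(X A Xᵀ)` is
monotone for that order, so `λ_min ‖X‖_F² ≤ tr(X P Xᵀ) ≤ λ_max ‖X‖_F²` for every `X`. The
theorem is the upper bound for `M` divided by the lower bound for `N`.
-/

open Matrix

namespace Matrix

open scoped MatrixOrder

variable {m n : Type*} [Fintype m] [Fintype n]

lemma monotone_trace_mul_mul_transpose (X : Matrix m n ℝ) :
    Monotone fun A : Matrix n n ℝ ↦ (X * A * Xᵀ).trace := by
  intro A B hAB
  have := ((le_iff.mp hAB).mul_mul_conjTranspose_same X).trace_nonneg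
  rw [conjTranspose_eq_transpose_of_trivial, Matrix.mul_sub, Matrix.sub_mul, trace_sub] at this
  exact sub_nonneg.mp this

lemma trace_mul_smul_one_mul_transpose [DecidableEq n] (X : Matrix m n ℝ) (r : ℝ) :
    (X * (r • 1 : Matrix n n ℝ) * Xᵀ).trace = r * (Xᵀ * X).trace := by
  rw [Matrix.mul_smul, Matrix.mul_one, Matrix.smul_mul, trace_smul, trace_mul_comm, smul_eq_mul]

section Loewner

variable [DecidableEq n] {A : Matrix n n ℝ} (hA : A.IsHermitian) {r : ℝ}
include hA

lemma IsHermitian.smul_one_le (hr : ∀ i, r ≤ hA.eigenvalues i) : r • 1 ≤ A := by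
  rw [← Algebra.algebraMap_eq_smul_one, algebraMap_le_iff_le_spectrum hA,
    hA.spectrum_real_eq_range_eigenvalues]
  rintro _ ⟨i, rfl⟩
  exact hr i

lemma IsHermitian.le_smul_one (hr : ∀ i, hA.eigenvalues i ≤ r) : A ≤ r • 1 := by
  rw [← Algebra.algebraMap_eq_smul_one, le_algebraMap_iff_spectrum_le hA,
    hA.spectrum_real_eq_range_eigenvalues]
  rintro _ ⟨i, rfl⟩
  exact hr i

lemma IsHermitian.mul_trace_transpose_mul_le (hr : ∀ i, r ≤ hA.eigenvalues i)
    (X : Matrix m n ℝ) : r * (Xᵀ * X).trace ≤ (X * A * Xᵀ).trace := by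
  simpa only [trace_mul_smul_one_mul_transpose] using
    monotone_trace_mul_mul_transpose X (hA.smul_one_le hr)

lemma IsHermitian.trace_mul_mul_transpose_le (hr : ∀ i, hA.eigenvalues i ≤ r)
    (X : Matrix m n ℝ) : (X * A * Xᵀ).trace ≤ r * (Xᵀ * X).trace := by
  simpa only [trace_mul_smul_one_mul_transpose] using
    monotone_trace_mul_mul_transpose X (hA.le_smul_one hr)

end Loewner

lemma trace_transpose_mul_self_pos {X : Matrix m n ℝ} (hX : X ≠ 0) : 0 < (Xᵀ * X).trace := by
  have h := (posSemidef_conjTranspose_mul_self X).trace_nonneg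
  have h' := (trace_conjTranspose_mul_self_eq_zero_iff (A := X)).not.mpr hX
  simp only [conjTranspose_eq_transpose_of_trivial] at h h'
  exact h.lt_of_ne' h'

lemma PosDef.iInf_eigenvalues_pos [DecidableEq n] [Nonempty n] {A : Matrix n n ℝ}
    (hA : A.PosDef) : 0 < ⨅ i, hA.1.eigenvalues i := by
  obtain ⟨i, hi⟩ := exists_eq_ciInf_of_finite (f := hA.1.eigenvalues)
  exact hi ▸ hA.eigenvalues_pos i

end Matrix

/-- For a symmetric positive definite `P`, a `p×n` matrix `M` and a nonzero
`q×n` matrix `N`, one has `tr(N·P·Nᵀ) > 0` and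
`tr(M·P·Mᵀ)/tr(N·P·Nᵀ) ≤ κ(P)·‖M‖_F²/‖N‖_F²`, where `κ(P) = λ_max(P)/λ_min(P)`
and `‖M‖_F² = tr(Mᵀ·M)`. -/
theorem stmt_7 {n p q : ℕ} (P : Matrix (Fin n) (Fin n) ℝ) (hP : P.PosDef)
    (M : Matrix (Fin p) (Fin n) ℝ) (N : Matrix (Fin q) (Fin n) ℝ) (hN : N ≠ 0) :
    0 < (N * P * Nᵀ).trace ∧
      (M * P * Mᵀ).trace / (N * P * Nᵀ).trace ≤
        ((⨆ i, hP.1.eigenvalues i) / (⨅ i, hP.1.eigenvalues i)) *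
          (Mᵀ * M).trace / (Nᵀ * N).trace := by
  have : Nonempty (Fin n) := by
    refine (isEmpty_or_nonempty _).resolve_left fun _ ↦ hN ?_
    ext i j; exact isEmptyElim j
  set lmin := ⨅ i, hP.1.eigenvalues i
  set lmax := ⨆ i, hP.1.eigenvalues i
  have hN_low : lmin * (Nᵀ * N).trace ≤ (N * P * Nᵀ).trace :=
    hP.1.mul_trace_transpose_mul_le (fun i ↦ ciInf_le (Set.finite_range _).bddBelow i) N
  have hM_up : (M * P * Mᵀ).trace ≤ lmax * (Mᵀ * M).trace :=
    hP.1.trace_mul_mul_transpose_le (fun i ↦ le_ciSup (Set.finite_range _).bddAbove i) M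
  have hN_pos : 0 < lmin * (Nᵀ * N).trace :=
    mul_pos hP.iInf_eigenvalues_pos (trace_transpose_mul_self_pos hN)
  refine ⟨hN_pos.trans_le hN_low, ?_⟩
  calc (M * P * Mᵀ).trace / (N * P * Nᵀ).trace
      ≤ lmax * (Mᵀ * M).trace / (lmin * (Nᵀ * N).trace) :=
        div_le_div₀ ((hP.posSemidef.mul_mul_conjTranspose_same M).trace_nonneg.trans hM_up)
          hM_up hN_pos hN_low
    _ = lmax / lmin * (Mᵀ * M).trace / (Nᵀ * N).trace := by rw [div_mul_eq_mul_div, div_div]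
end

section
/- Let P be a symmetric positive definite n×n real matrix and let P_R be a symmetric n×n real matrix such that ‖P_R − P‖₂ ≤ δ·‖P‖₂ for some δ ∈ [0,1) with δ·κ(P) < 1, where κ(P) = λ_max(P)/λ_min(P). Then λ_min(P_R) ≥ λ_min(P)·(1 − δ·κ(P)) > 0 (so P_R is positive definite), ‖P_R‖₂ ≤ (1+δ)·‖P‖₂, and κ(P_R) ≤ κ(P)·(1+δ)/(1 − δ·κ(P)). -/
/-!
For Hermitian `A`, `c ≤ λ_min(A)` iff `A - c • 1` is positive semidefinite, and every eigenvalue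
of `A` is bounded in absolute value by `‖A‖`. Hence `(P - λ_min(P) • 1) + (E + ‖E‖ • 1) ⪰ 0` for
`E = P_R - P`, which is Weyl's bound `λ_min(P_R) ≥ λ_min(P) - ‖P_R - P‖`; since `‖P‖ = λ_max(P)`
for `P ⪰ 0`, this is at least `λ_min(P) - δ λ_max(P) = λ_min(P) (1 - δ κ(P))`. The norm bound is the
triangle inequality, and `λ_max(P_R) ≤ ‖P_R‖ ≤ (1 + δ) λ_max(P)` gives the bound on `κ(P_R)`.
-/

open Matrix
open scoped Matrix.Norms.L2Operator

namespace Matrix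

open scoped ComplexOrder

variable {𝕜 n : Type*} [RCLike 𝕜] [Fintype n] [DecidableEq n] {A B : Matrix n n 𝕜}

theorem IsHermitian.l2_opNorm_eq_norm_eigenvalues (hA : A.IsHermitian) :
    ‖A‖ = ‖hA.eigenvalues‖ := by
  conv_lhs => rw [hA.spectral_theorem]
  rw [Unitary.conjStarAlgAut_apply,
    CStarRing.norm_mul_mem_unitary _ (Unitary.star_mem hA.eigenvectorUnitary.2),
    CStarRing.norm_coe_unitary_mul, l2_opNorm_diagonal]
  simp [Pi.norm_def]

theorem IsHermitian.abs_eigenvalues_le_l2_opNorm (hA : A.IsHermitian) (i : n) :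
    |hA.eigenvalues i| ≤ ‖A‖ :=
  hA.l2_opNorm_eq_norm_eigenvalues ▸ norm_le_pi_norm hA.eigenvalues i

theorem IsHermitian.forall_le_eigenvalues_iff (hA : A.IsHermitian) (c : ℝ) :
    (∀ i, c ≤ hA.eigenvalues i) ↔ (A - algebraMap ℝ (Matrix n n 𝕜) c).PosSemidef := by
  rw [posSemidef_iff_isHermitian_and_spectrum_nonneg,
    and_iff_right (hA.sub ((IsSelfAdjoint.all c).algebraMap _)),
    IsScalarTower.algebraMap_apply ℝ 𝕜, ← spectrum.sub_singleton_eq, hA.spectrum_eq_image_range]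
  simp only [Set.sub_singleton, Set.image_subset_iff, Set.preimage_ofPred_eq, sub_nonneg,
    algebraMap_le_algebraMap, Set.range_subset_iff, Set.mem_ofPred_eq]

theorem IsHermitian.iInf_eigenvalues_sub_le [Nonempty n] (hA : A.IsHermitian)
    (hB : B.IsHermitian) :
    (⨅ i, hA.eigenvalues i) - ‖B - A‖ ≤ ⨅ i, hB.eigenvalues i := by
  have hAc := (hA.forall_le_eigenvalues_iff _).1 fun i => ciInf_le (Finite.bddBelow_range _) i
  have hE := ((hB.sub hA).forall_le_eigenvalues_iff (-‖B - A‖)).1 fun i =>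
    neg_le_of_abs_le ((hB.sub hA).abs_eigenvalues_le_l2_opNorm i)
  refine le_ciInf ((hB.forall_le_eigenvalues_iff _).2 ?_)
  convert hAc.add hE using 1
  simp only [map_sub, map_neg]
  abel

theorem IsHermitian.iSup_eigenvalues_le_l2_opNorm [Nonempty n] (hA : A.IsHermitian) :
    ⨆ i, hA.eigenvalues i ≤ ‖A‖ :=
  ciSup_le fun i => (le_abs_self _).trans (hA.abs_eigenvalues_le_l2_opNorm i)

theorem PosSemidef.l2_opNorm_eq_iSup_eigenvalues [Nonempty n] (hA : A.PosSemidef) :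
    ‖A‖ = ⨆ i, hA.1.eigenvalues i := by
  refine le_antisymm ?_ hA.1.iSup_eigenvalues_le_l2_opNorm
  have hle : ∀ i, hA.1.eigenvalues i ≤ ⨆ i, hA.1.eigenvalues i :=
    le_ciSup (Finite.bddAbove_range _)
  rw [hA.1.l2_opNorm_eq_norm_eigenvalues,
    pi_norm_le_iff_of_nonneg ((hA.eigenvalues_nonneg (Classical.arbitrary n)).trans (hle _))]
  intro i
  rw [Real.norm_of_nonneg (hA.eigenvalues_nonneg i)]
  exact hle i

end Matrix

theorem stmt_8_general {n : ℕ} [NeZero n] (P P_R : Matrix (Fin n) (Fin n) ℝ)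
    (hP : P.PosDef) (hPR : P_R.IsHermitian) (δ : ℝ)
    (hδ0 : 0 ≤ δ)
    (hδκ : δ * ((⨆ i, hP.1.eigenvalues i) / (⨅ i, hP.1.eigenvalues i)) < 1)
    (hpert : ‖P_R - P‖ ≤ δ * ‖P‖) :
    ((⨅ i, hP.1.eigenvalues i) *
        (1 - δ * ((⨆ i, hP.1.eigenvalues i) / (⨅ i, hP.1.eigenvalues i)))
        ≤ ⨅ i, hPR.eigenvalues i) ∧
    (0 < (⨅ i, hP.1.eigenvalues i) *
        (1 - δ * ((⨆ i, hP.1.eigenvalues i) / (⨅ i, hP.1.eigenvalues i)))) ∧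
    P_R.PosDef ∧
    ‖P_R‖ ≤ (1 + δ) * ‖P‖ ∧
    (⨆ i, hPR.eigenvalues i) / (⨅ i, hPR.eigenvalues i) ≤
      ((⨆ i, hP.1.eigenvalues i) / (⨅ i, hP.1.eigenvalues i)) * (1 + δ) /
        (1 - δ * ((⨆ i, hP.1.eigenvalues i) / (⨅ i, hP.1.eigenvalues i))) := by
  have hweyl := hP.1.iInf_eigenvalues_sub_le hPR
  have hnormP := hP.posSemidef.l2_opNorm_eq_iSup_eigenvalues
  have hlmin : 0 < ⨅ i, hP.1.eigenvalues i := by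
    obtain ⟨i, hi⟩ := exists_eq_ciInf_of_finite (f := hP.1.eigenvalues)
    exact hi ▸ hP.eigenvalues_pos i
  set lmin := ⨅ i, hP.1.eigenvalues i
  set lmax := ⨆ i, hP.1.eigenvalues i
  rw [hnormP] at hpert ⊢
  have hbound : lmin * (1 - δ * (lmax / lmin)) = lmin - δ * lmax := by field_simp
  have hlow : lmin * (1 - δ * (lmax / lmin)) ≤ ⨅ i, hPR.eigenvalues i := by
    rw [hbound]; linarith
  have hpos : 0 < lmin * (1 - δ * (lmax / lmin)) := mul_pos hlmin (by linarith)
  have hnormPR : ‖P_R‖ ≤ (1 + δ) * lmax := by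
    linarith [norm_le_norm_add_norm_sub' P_R P]
  refine ⟨hlow, hpos, hPR.posDef_iff_eigenvalues_pos.2 fun i =>
    hpos.trans_le (hlow.trans (ciInf_le (Finite.bddBelow_range _) i)), hnormPR, ?_⟩
  calc (⨆ i, hPR.eigenvalues i) / (⨅ i, hPR.eigenvalues i)
      ≤ (1 + δ) * lmax / (lmin * (1 - δ * (lmax / lmin))) :=
        div_le_div₀ (hnormP ▸ by positivity) (hPR.iSup_eigenvalues_le_l2_opNorm.trans hnormPR)
          hpos hlow
    _ = lmax / lmin * (1 + δ) / (1 - δ * (lmax / lmin)) := by field_simp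

/-- Let `P` be symmetric positive definite and `P_R` symmetric with
`‖P_R − P‖₂ ≤ δ·‖P‖₂` for some `δ ∈ [0,1)` with `δ·κ(P) < 1`, where
`κ(P) = λ_max(P)/λ_min(P)`.  Then `λ_min(P_R) ≥ λ_min(P)·(1 − δ·κ(P)) > 0`
(so `P_R` is positive definite), `‖P_R‖₂ ≤ (1+δ)·‖P‖₂`, and
`κ(P_R) ≤ κ(P)·(1+δ)/(1 − δ·κ(P))`. -/
theorem stmt_8 {n : ℕ} [NeZero n] (P P_R : Matrix (Fin n) (Fin n) ℝ)
    (hP : P.PosDef) (hPR : P_R.IsHermitian) (δ : ℝ)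
    (hδ0 : 0 ≤ δ) (hδ1 : δ < 1)
    (hδκ : δ * ((⨆ i, hP.1.eigenvalues i) / (⨅ i, hP.1.eigenvalues i)) < 1)
    (hpert : ‖P_R - P‖ ≤ δ * ‖P‖) :
    ((⨅ i, hP.1.eigenvalues i) *
        (1 - δ * ((⨆ i, hP.1.eigenvalues i) / (⨅ i, hP.1.eigenvalues i)))
        ≤ ⨅ i, hPR.eigenvalues i) ∧
    (0 < (⨅ i, hP.1.eigenvalues i) *
        (1 - δ * ((⨆ i, hP.1.eigenvalues i) / (⨅ i, hP.1.eigenvalues i)))) ∧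
    P_R.PosDef ∧
    ‖P_R‖ ≤ (1 + δ) * ‖P‖ ∧
    (⨆ i, hPR.eigenvalues i) / (⨅ i, hPR.eigenvalues i) ≤
      ((⨆ i, hP.1.eigenvalues i) / (⨅ i, hP.1.eigenvalues i)) * (1 + δ) /
        (1 - δ * ((⨆ i, hP.1.eigenvalues i) / (⨅ i, hP.1.eigenvalues i))) :=
  stmt_8_general P P_R hP hPR δ hδ0 hδκ hpert
end

section
/- Let A be a nonzero n×n real matrix admitting an exponential decay bound: there exist M > 0 and α > 0 such that ‖exp(tA)‖₂ ≤ M·exp(−α t) for all t ≥ 0. Let B be an n×m real matrix for which there exists σ > 0 such that ‖Bᵀ·v‖₂ ≥ σ·‖v‖₂ for all v ∈ ℝⁿ (i.e., B has full row-rank transpose with smallest singular value at least σ). Let P_R = ∫₀^∞ exp(tA)·B·Bᵀ·exp(tAᵀ) dt be the controllability Gramian. Then for every vector x ∈ ℝⁿ, xᵀ·P_R·x ≥ (σ²/(16·‖A‖₂))·‖x‖₂²; equivalently, λ_min(P_R) ≥ σ²/(16·‖A‖₂). -/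
/-!
Write `y = exp(tAᵀ) x`. The quadratic form of the integrand at time `t` is `‖Bᵀ y‖² ≥ σ² ‖y‖²`,
and `x = exp(-tAᵀ) y` gives `‖y‖ ≥ e^{-t‖A‖} ‖x‖`. On the window `0 < t ≤ 1/(2‖A‖)` the integrand
is therefore at least `σ² ‖x‖² / e`; as it is positive semidefinite everywhere and integrable by the
decay bound, `xᵀ P_R x ≥ σ² ‖x‖² / (2e‖A‖) ≥ σ² ‖x‖² / (16‖A‖)`. Testing this on unit
eigenvectors bounds the eigenvalues.
-/

open Matrix MeasureTheory
open scoped Matrix.Norms.L2Operator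

/-- The Euclidean norm of a vector in `ℝⁿ`. -/
noncomputable def euclNorm {n : ℕ} (x : Fin n → ℝ) : ℝ :=
  Real.sqrt (∑ i, x i ^ 2)

open NormedSpace Set

theorem norm_exp_le_real_exp_norm {𝔸 : Type*} [NormedRing 𝔸] [NormedAlgebra ℝ 𝔸] [NormOneClass 𝔸]
    [CompleteSpace 𝔸] (x : 𝔸) : ‖exp x‖ ≤ Real.exp ‖x‖ := by
  rw [Real.exp_eq_exp_ℝ, exp_eq_tsum_div (𝔸 := ℝ), exp_eq_tsum ℝ]
  refine (norm_tsum_le_tsum_norm (norm_expSeries_summable' (𝕂 := ℝ) x)).trans ?_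
  refine (norm_expSeries_summable' (𝕂 := ℝ) x).tsum_le_tsum (fun k => ?_)
    (Real.summable_pow_div_factorial ‖x‖)
  rw [norm_smul, Real.norm_eq_abs, abs_inv, Nat.abs_cast, div_eq_inv_mul]
  gcongr
  exact norm_pow_le x k

theorem Matrix.l2_opNorm_transpose_s14 {m n : Type*} [Fintype m] [Fintype n] [DecidableEq m]
    [DecidableEq n] (A : Matrix m n ℝ) : ‖Aᵀ‖ = ‖A‖ :=
  A.l2_opNorm_conjTranspose

section Euclidean

variable {n m : ℕ}

theorem euclNorm_eq_norm (x : Fin n → ℝ) :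
    euclNorm x = ‖(EuclideanSpace.equiv (Fin n) ℝ).symm x‖ := by
  simp [euclNorm, EuclideanSpace.norm_eq, Real.norm_eq_abs, sq_abs]

theorem euclNorm_nonneg (x : Fin n → ℝ) : 0 ≤ euclNorm x := Real.sqrt_nonneg _

theorem euclNorm_mulVec_le (M : Matrix (Fin m) (Fin n) ℝ) (v : Fin n → ℝ) :
    euclNorm (M *ᵥ v) ≤ ‖M‖ * euclNorm v := by
  rw [euclNorm_eq_norm, euclNorm_eq_norm]
  exact M.l2_opNorm_mulVec _

theorem dotProduct_mul_transpose_mulVec (M : Matrix (Fin n) (Fin m) ℝ) (x : Fin n → ℝ) :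
    x ⬝ᵥ (M * Mᵀ) *ᵥ x = euclNorm (Mᵀ *ᵥ x) ^ 2 := by
  rw [euclNorm, Real.sq_sqrt (by positivity), ← mulVec_mulVec, dotProduct_mulVec,
    ← mulVec_transpose]
  simp [dotProduct, sq]

theorem exp_neg_norm_mul_euclNorm_le (X : Matrix (Fin n) (Fin n) ℝ) (x : Fin n → ℝ) :
    Real.exp (-‖X‖) * euclNorm x ≤ euclNorm (exp X *ᵥ x) := by
  rcases isEmpty_or_nonempty (Fin n) with hn | hn
  · simp [euclNorm]
  have hx : exp (-X) *ᵥ (exp X *ᵥ x) = x := by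
    rw [mulVec_mulVec, ← Matrix.exp_add_of_commute _ _ (Commute.neg_left (Commute.refl X)),
      neg_add_cancel, exp_zero, one_mulVec]
  rw [Real.exp_neg, inv_mul_le_iff₀ (Real.exp_pos _)]
  calc euclNorm x = euclNorm (exp (-X) *ᵥ (exp X *ᵥ x)) := by rw [hx]
    _ ≤ ‖exp (-X)‖ * euclNorm (exp X *ᵥ x) := euclNorm_mulVec_le _ _
    _ ≤ Real.exp ‖X‖ * euclNorm (exp X *ᵥ x) := by
      gcongr
      · exact euclNorm_nonneg _
      · simpa using norm_exp_le_real_exp_norm (-X)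

end Euclidean

theorem Matrix.dotProduct_integral_mulVec {ι X : Type*} [Fintype ι] [DecidableEq ι]
    [MeasurableSpace X] {μ : Measure X} {F : X → Matrix ι ι ℝ} (hF : Integrable F μ)
    (x : ι → ℝ) :
    x ⬝ᵥ (∫ t, F t ∂μ) *ᵥ x = ∫ t, x ⬝ᵥ F t *ᵥ x ∂μ ∧
      Integrable (fun t => x ⬝ᵥ F t *ᵥ x) μ := by
  let L : Matrix ι ι ℝ →L[ℝ] ℝ := LinearMap.toContinuousLinearMap
    { toFun := fun N => x ⬝ᵥ N *ᵥ x
      map_add' := fun N N' => by simp [add_mulVec, dotProduct_add]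
      map_smul' := fun r N => by simp [smul_mulVec, dotProduct_smul] }
  exact ⟨(L.integral_comp_comm hF).symm, L.integrable_comp hF⟩

theorem mul_le_setIntegral_Ioi_of_le_on_Ioc {g : ℝ → ℝ} {a b c : ℝ} (hab : a ≤ b)
    (hg : IntegrableOn g (Ioi a)) (hg_nonneg : ∀ t ∈ Ioi a, 0 ≤ g t)
    (hc : ∀ t ∈ Ioc a b, c ≤ g t) :
    (b - a) * c ≤ ∫ t in Ioi a, g t :=
  calc (b - a) * c = ∫ _ in Ioc a b, c := by
        rw [setIntegral_const, Real.volume_real_Ioc_of_le hab, smul_eq_mul]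
    _ ≤ ∫ t in Ioc a b, g t :=
        setIntegral_mono_on (integrableOn_const measure_Ioc_lt_top.ne)
          (hg.mono_set Ioc_subset_Ioi_self) measurableSet_Ioc hc
    _ ≤ ∫ t in Ioi a, g t :=
        setIntegral_mono_set hg (ae_restrict_of_forall_mem measurableSet_Ioi hg_nonneg)
          Ioc_subset_Ioi_self.eventuallyLE

section Gramian

variable {n m : ℕ} (A : Matrix (Fin n) (Fin n) ℝ) (B : Matrix (Fin n) (Fin m) ℝ)

noncomputable def gramianIntegrand (t : ℝ) : Matrix (Fin n) (Fin n) ℝ :=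
  exp (t • A) * (B * Bᵀ) * exp (t • Aᵀ)

noncomputable def gramian : Matrix (Fin n) (Fin n) ℝ :=
  ∫ t in Ioi 0, gramianIntegrand A B t

theorem exp_smul_transpose (t : ℝ) : exp (t • Aᵀ) = (exp (t • A))ᵀ := by
  rw [← transpose_smul, Matrix.exp_transpose]

theorem gramianIntegrand_eq (t : ℝ) :
    gramianIntegrand A B t = (exp (t • A) * B) * (exp (t • A) * B)ᵀ := by
  simp only [gramianIntegrand, exp_smul_transpose, transpose_mul, Matrix.mul_assoc]

theorem dotProduct_gramianIntegrand_mulVec (t : ℝ) (x : Fin n → ℝ) :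
    x ⬝ᵥ gramianIntegrand A B t *ᵥ x = euclNorm (Bᵀ *ᵥ exp (t • Aᵀ) *ᵥ x) ^ 2 := by
  rw [gramianIntegrand_eq, dotProduct_mul_transpose_mulVec, transpose_mul, ← mulVec_mulVec,
    exp_smul_transpose]

theorem continuous_gramianIntegrand : Continuous (gramianIntegrand A B) := by
  let _ : NormedAlgebra ℚ (Matrix (Fin n) (Fin n) ℝ) := NormedAlgebra.restrictScalars ℚ ℝ _
  have hexp (X : Matrix (Fin n) (Fin n) ℝ) : Continuous fun t : ℝ => exp (t • X) :=
    exp_continuous.comp (continuous_id.smul continuous_const)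
  exact ((hexp A).mul continuous_const).mul (hexp Aᵀ)

variable {A} in
theorem norm_gramianIntegrand_le {M α t : ℝ} (ht : 0 ≤ t)
    (hdecay : ∀ t : ℝ, 0 ≤ t → ‖exp (t • A)‖ ≤ M * Real.exp (-α * t)) :
    ‖gramianIntegrand A B t‖ ≤ M ^ 2 * ‖B * Bᵀ‖ * Real.exp (-(2 * α) * t) := by
  have hE := hdecay t ht
  have hET : ‖exp (t • Aᵀ)‖ ≤ M * Real.exp (-α * t) := by
    rwa [exp_smul_transpose, l2_opNorm_transpose_s14]
  calc ‖gramianIntegrand A B t‖ ≤ ‖exp (t • A)‖ * ‖B * Bᵀ‖ * ‖exp (t • Aᵀ)‖ :=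
        (l2_opNorm_mul _ _).trans (by gcongr; exact l2_opNorm_mul _ _)
    _ ≤ M * Real.exp (-α * t) * ‖B * Bᵀ‖ * (M * Real.exp (-α * t)) := by
        have hM : 0 ≤ M * Real.exp (-α * t) := (norm_nonneg _).trans hE
        gcongr
    _ = M ^ 2 * ‖B * Bᵀ‖ * Real.exp (-(2 * α) * t) := by
        rw [show -(2 * α) * t = -α * t + -α * t by ring, Real.exp_add]
        ring

variable {A} in
theorem integrableOn_gramianIntegrand {M α : ℝ} (hα : 0 < α)
    (hdecay : ∀ t : ℝ, 0 ≤ t → ‖exp (t • A)‖ ≤ M * Real.exp (-α * t)) :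
    IntegrableOn (gramianIntegrand A B) (Ioi 0) :=
  Integrable.mono' ((exp_neg_integrableOn_Ioi 0 (by positivity)).const_mul _)
    (continuous_gramianIntegrand A B).aestronglyMeasurable.restrict
    ((ae_restrict_mem measurableSet_Ioi).mono fun t ht =>
      norm_gramianIntegrand_le B (le_of_lt ht) hdecay)

end Gramian

section GramianBound

variable {n m : ℕ} {A : Matrix (Fin n) (Fin n) ℝ} {B : Matrix (Fin n) (Fin m) ℝ} {σ : ℝ}

theorem le_dotProduct_gramianIntegrand_mulVec (hσ : 0 ≤ σ)
    (hB : ∀ v : Fin n → ℝ, σ * euclNorm v ≤ euclNorm (Bᵀ *ᵥ v)) {t : ℝ} (ht : 0 ≤ t)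
    (x : Fin n → ℝ) :
    σ ^ 2 * Real.exp (-(2 * t * ‖A‖)) * euclNorm x ^ 2 ≤
      x ⬝ᵥ gramianIntegrand A B t *ᵥ x := by
  have hy : Real.exp (-(t * ‖A‖)) * euclNorm x ≤ euclNorm (exp (t • Aᵀ) *ᵥ x) := by
    simpa [norm_smul, abs_of_nonneg ht, l2_opNorm_transpose_s14] using
      exp_neg_norm_mul_euclNorm_le (t • Aᵀ) x
  have hBy : σ * (Real.exp (-(t * ‖A‖)) * euclNorm x) ≤ euclNorm (Bᵀ *ᵥ exp (t • Aᵀ) *ᵥ x) :=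
    (mul_le_mul_of_nonneg_left hy hσ).trans (hB _)
  rw [dotProduct_gramianIntegrand_mulVec]
  calc σ ^ 2 * Real.exp (-(2 * t * ‖A‖)) * euclNorm x ^ 2
      = (σ * (Real.exp (-(t * ‖A‖)) * euclNorm x)) ^ 2 := by
        rw [show -(2 * t * ‖A‖) = -(t * ‖A‖) + -(t * ‖A‖) by ring, Real.exp_add]
        ring
    _ ≤ euclNorm (Bᵀ *ᵥ exp (t • Aᵀ) *ᵥ x) ^ 2 := by
        have := euclNorm_nonneg x
        gcongr

theorem le_dotProduct_gramian_mulVec (hA : A ≠ 0) {M α : ℝ} (hα : 0 < α)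
    (hdecay : ∀ t : ℝ, 0 ≤ t → ‖exp (t • A)‖ ≤ M * Real.exp (-α * t)) (hσ : 0 ≤ σ)
    (hB : ∀ v : Fin n → ℝ, σ * euclNorm v ≤ euclNorm (Bᵀ *ᵥ v)) (x : Fin n → ℝ) :
    σ ^ 2 / (2 * Real.exp 1 * ‖A‖) * euclNorm x ^ 2 ≤
      x ⬝ᵥ gramian A B *ᵥ x := by
  have hA' : 0 < ‖A‖ := norm_pos_iff.mpr hA
  obtain ⟨hswap, hint⟩ :=
    Matrix.dotProduct_integral_mulVec (integrableOn_gramianIntegrand B hα hdecay) x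
  rw [gramian, hswap]
  have hwindow : ∀ t ∈ Ioc 0 (2 * ‖A‖)⁻¹,
      σ ^ 2 * Real.exp (-1) * euclNorm x ^ 2 ≤ x ⬝ᵥ gramianIntegrand A B t *ᵥ x := by
    rintro t ⟨ht0, htT⟩
    refine le_trans ?_ (le_dotProduct_gramianIntegrand_mulVec hσ hB ht0.le x)
    have : 2 * t * ‖A‖ ≤ 1 := by
      rw [← one_div, le_div_iff₀ (by positivity)] at htT
      linarith
    gcongr
  have := mul_le_setIntegral_Ioi_of_le_on_Ioc (by positivity) hint
    (fun t ht => by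
      rw [dotProduct_gramianIntegrand_mulVec]
      positivity) hwindow
  convert this using 1
  rw [Real.exp_neg, sub_zero]
  field_simp

end GramianBound

theorem Matrix.IsHermitian.le_iInf_eigenvalues {n : ℕ} [Nonempty (Fin n)]
    {P : Matrix (Fin n) (Fin n) ℝ} (hP : P.IsHermitian) {c : ℝ}
    (hc : ∀ x, c * euclNorm x ^ 2 ≤ x ⬝ᵥ P *ᵥ x) :
    c ≤ ⨅ i, hP.eigenvalues i := by
  refine le_ciInf fun i => ?_
  have hunit : euclNorm (hP.eigenvectorBasis i) = 1 := by
    rw [euclNorm_eq_norm]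
    exact hP.eigenvectorBasis.orthonormal.1 i
  simpa [hP.eigenvalues_eq i, hunit] using hc (hP.eigenvectorBasis i)

theorem stmt_14_general {n m : ℕ} (A : Matrix (Fin n) (Fin n) ℝ) (hA : A ≠ 0)
    (B : Matrix (Fin n) (Fin m) ℝ)
    (M α : ℝ) (hα : 0 < α)
    (hdecay : ∀ t : ℝ, 0 ≤ t →
      ‖NormedSpace.exp (t • A)‖ ≤ M * Real.exp (-α * t))
    (σ : ℝ) (hσ : 0 < σ)
    (hB : ∀ v : Fin n → ℝ, σ * euclNorm v ≤ euclNorm (Bᵀ *ᵥ v)) :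
    (∀ x : Fin n → ℝ,
      σ ^ 2 / (16 * ‖A‖) * (euclNorm x) ^ 2 ≤
        x ⬝ᵥ (∫ t in Set.Ioi (0 : ℝ),
          NormedSpace.exp (t • A) * (B * Bᵀ) * NormedSpace.exp (t • Aᵀ)) *ᵥ x) ∧
    ∀ (h : (∫ t in Set.Ioi (0 : ℝ),
        NormedSpace.exp (t • A) * (B * Bᵀ) * NormedSpace.exp (t • Aᵀ)).IsHermitian),
      σ ^ 2 / (16 * ‖A‖) ≤ ⨅ i, h.eigenvalues i := by
  have hA' : 0 < ‖A‖ := norm_pos_iff.mpr hA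
  have hquad (x : Fin n → ℝ) := le_dotProduct_gramian_mulVec hA hα hdecay hσ.le hB x
  have hconst : σ ^ 2 / (16 * ‖A‖) ≤ σ ^ 2 / (2 * Real.exp 1 * ‖A‖) := by
    have := Real.exp_one_lt_d9
    gcongr
    linarith
  have hbound (x : Fin n → ℝ) := (mul_le_mul_of_nonneg_right hconst (sq_nonneg _)).trans (hquad x)
  refine ⟨hbound, fun hP => ?_⟩
  have : Nonempty (Fin n) := by
    by_contra hn
    exact hA (Matrix.ext fun i => (not_nonempty_iff.mp hn).elim i)
  exact hP.le_iInf_eigenvalues hbound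

/-- Let `A ≠ 0` admit the exponential decay bound
`‖exp(tA)‖₂ ≤ M·exp(−αt)` for all `t ≥ 0`, and let `B` satisfy `‖Bᵀ·v‖₂ ≥ σ·‖v‖₂`
for all `v` and some `σ > 0`.  With `P_R = ∫₀^∞ exp(tA)·B·Bᵀ·exp(tAᵀ) dt`, every
`x ∈ ℝⁿ` satisfies `xᵀ·P_R·x ≥ (σ²/(16·‖A‖₂))·‖x‖₂²`; equivalently
`λ_min(P_R) ≥ σ²/(16·‖A‖₂)`. -/
theorem stmt_14 {n m : ℕ} (A : Matrix (Fin n) (Fin n) ℝ) (hA : A ≠ 0)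
    (B : Matrix (Fin n) (Fin m) ℝ)
    (M α : ℝ) (hM : 0 < M) (hα : 0 < α)
    (hdecay : ∀ t : ℝ, 0 ≤ t →
      ‖NormedSpace.exp (t • A)‖ ≤ M * Real.exp (-α * t))
    (σ : ℝ) (hσ : 0 < σ)
    (hB : ∀ v : Fin n → ℝ, σ * euclNorm v ≤ euclNorm (Bᵀ *ᵥ v)) :
    (∀ x : Fin n → ℝ,
      σ ^ 2 / (16 * ‖A‖) * (euclNorm x) ^ 2 ≤
        x ⬝ᵥ (∫ t in Set.Ioi (0 : ℝ),
          NormedSpace.exp (t • A) * (B * Bᵀ) * NormedSpace.exp (t • Aᵀ)) *ᵥ x) ∧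
    ∀ (h : (∫ t in Set.Ioi (0 : ℝ),
        NormedSpace.exp (t • A) * (B * Bᵀ) * NormedSpace.exp (t • Aᵀ)).IsHermitian),
      σ ^ 2 / (16 * ‖A‖) ≤ ⨅ i, h.eigenvalues i :=
  stmt_14_general A hA B M α hα hdecay σ hσ hB
end
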